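/- (Theorem 1(iii)) In the variant of 3-bit PMRAC, suppose the average success probability attains the optimal value S_Q = 1/2 + 1/√6. Then Bob's observables are uniquely determined by the states: B_y = √(3/8)(N_y − M_y) for each y ∈ {1,2,3}. -/

import Mathlib

open Matrix
open scoped Kronecker ComplexOrder

noncomputable section

abbrev Mat2 := Matrix (Fin 2) (Fin 2) ℂ
abbrev Mat4 := Matrix (Fin 2 × Fin 2) (Fin 2 × Fin 2) ℂ

/-- The state ρ_x = (U_x ⊗ I₂) ρ (U_x ⊗ I₂)†. -/
def ρst (ρ : Mat4) (U : (Fin 3 → Fin 2) → Mat2) (x : Fin 3 → Fin 2) : Mat4 :=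
  (U x ⊗ₖ (1 : Mat2)) * ρ * (U x ⊗ₖ (1 : Mat2))ᴴ

def Mop (ρ : (Fin 3 → Fin 2) → Mat4) : Fin 3 → Mat4 :=
  ![-ρ ![0, 0, 0] - ρ ![0, 1, 1] + ρ ![1, 0, 1] + ρ ![1, 1, 0],
    -ρ ![0, 0, 0] + ρ ![0, 1, 1] - ρ ![1, 0, 1] + ρ ![1, 1, 0],
    -ρ ![0, 0, 0] + ρ ![0, 1, 1] + ρ ![1, 0, 1] - ρ ![1, 1, 0]]

def Nop (ρ : (Fin 3 → Fin 2) → Mat4) : Fin 3 → Mat4 :=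
  ![ρ ![0, 0, 1] + ρ ![0, 1, 0] - ρ ![1, 0, 0] - ρ ![1, 1, 1],
    ρ ![0, 0, 1] - ρ ![0, 1, 0] + ρ ![1, 0, 0] - ρ ![1, 1, 1],
    -ρ ![0, 0, 1] + ρ ![0, 1, 0] + ρ ![1, 0, 0] - ρ ![1, 1, 1]]

/-!
Write `C_y = N_y - M_y`. Since every `ρ_x` has trace one, `S_Q = 1/2 + (1/48) ∑_y Tr(C_y B_y)`.
For the Hilbert–Schmidt inner product `⟪A, B⟫ = Tr(B Aᴴ)` we have `‖B_y‖² = Tr(B_y²) = 4`, while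
`C₀, C₁, C₂` are three of the four Hadamard sign combinations of the differences `ρ_x - ρ_x̄` of
antipodal states. Each such difference has `‖ρ_x - ρ_x̄‖² ≤ 2` (states have purity at most one and
nonnegative overlaps), so `∑_y ‖C_y‖² ≤ 4 · 4 · 2 = 32`. Cauchy–Schwarz then bounds
`∑_y Tr(C_y B_y)` by `√12 · √32 = 8√6`, which is exactly the optimal value, and the equality case
forces `B_y = √(12/32) C_y`.
-/

open scoped InnerProductSpace

theorem sum_norm_sq_hadamard (𝕜 : Type*) {E : Type*} [RCLike 𝕜] [NormedAddCommGroup E]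
    [InnerProductSpace 𝕜 E] (a b c d : E) :
    ‖a + b + c + d‖ ^ 2 + ‖a + b - c - d‖ ^ 2 + ‖a - b + c - d‖ ^ 2 + ‖a - b - c + d‖ ^ 2
      = 4 * (‖a‖ ^ 2 + ‖b‖ ^ 2 + ‖c‖ ^ 2 + ‖d‖ ^ 2) := by
  have h₁ := parallelogram_law_with_norm 𝕜 (a + b) (c + d)
  have h₂ := parallelogram_law_with_norm 𝕜 (a - b) (c - d)
  rw [show a + b + (c + d) = a + b + c + d by abel, show a + b - (c + d) = a + b - c - d by abel]
    at h₁
  rw [show a - b + (c - d) = a - b + c - d by abel, show a - b - (c - d) = a - b - c + d by abel]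
    at h₂
  linarith [parallelogram_law_with_norm 𝕜 a b, parallelogram_law_with_norm 𝕜 c d]

theorem eq_smul_of_sum_re_inner_eq_mul {𝕜 E ι : Type*} [RCLike 𝕜] [NormedAddCommGroup E]
    [InnerProductSpace 𝕜 E] [Fintype ι] (B C : ι → E) {b c : ℝ} (hc : c ≠ 0)
    (hB : ∑ i, ‖B i‖ ^ 2 = b ^ 2) (hC : ∑ i, ‖C i‖ ^ 2 ≤ c ^ 2)
    (hBC : ∑ i, RCLike.re ⟪B i, C i⟫_𝕜 = b * c) (i : ι) :
    B i = ((b / c : ℝ) : 𝕜) • C i := by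
  have hexpand : ∀ j, ‖B j - ((b / c : ℝ) : 𝕜) • C j‖ ^ 2
      = ‖B j‖ ^ 2 - 2 * (b / c) * RCLike.re ⟪B j, C j⟫_𝕜 + (b / c) ^ 2 * ‖C j‖ ^ 2 := by
    intro j
    rw [@norm_sub_sq 𝕜, inner_smul_real_right, norm_smul, RCLike.norm_ofReal, mul_pow, sq_abs,
      RCLike.smul_re]
    ring
  have hsum : ∑ j, ‖B j - ((b / c : ℝ) : 𝕜) • C j‖ ^ 2 ≤ 0 := by
    simp only [hexpand, Finset.sum_add_distrib, Finset.sum_sub_distrib, ← Finset.mul_sum, hB, hBC]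
    have hCscaled : (b / c) ^ 2 * ∑ j, ‖C j‖ ^ 2 ≤ (b / c) ^ 2 * c ^ 2 :=
      mul_le_mul_of_nonneg_left hC (sq_nonneg _)
    have hsq : (b / c) ^ 2 * c ^ 2 = b ^ 2 := by field_simp
    have hcross : 2 * (b / c) * (b * c) = 2 * b ^ 2 := by field_simp
    linarith
  have hzero := (Finset.sum_eq_zero_iff_of_nonneg fun j _ => sq_nonneg _).mp
    (le_antisymm hsum (Finset.sum_nonneg fun j _ => sq_nonneg _)) i (Finset.mem_univ i)
  exact sub_eq_zero.mp (norm_eq_zero.mp (pow_eq_zero_iff two_ne_zero |>.mp hzero))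

namespace Matrix

variable {n 𝕜 : Type*} [Fintype n] [RCLike 𝕜]

theorem trace_conjStarAlgAut [DecidableEq n] (U : unitary (Matrix n n 𝕜)) (A : Matrix n n 𝕜) :
    (Unitary.conjStarAlgAut 𝕜 _ U A).trace = A.trace := by
  rw [Unitary.conjStarAlgAut_apply, trace_mul_cycle, Unitary.coe_star_mul_self, one_mul]

theorem PosSemidef.re_trace_mul_self_le_sq [DecidableEq n] {A : Matrix n n 𝕜}
    (hA : A.PosSemidef) : RCLike.re (A * A).trace ≤ RCLike.re A.trace ^ 2 := by
  have hsq : (A * A).trace = ∑ i, ((hA.1.eigenvalues i ^ 2 : ℝ) : 𝕜) := by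
    conv_lhs => rw [hA.1.spectral_theorem]
    rw [← map_mul, trace_conjStarAlgAut, diagonal_mul_diagonal, trace_diagonal]
    simp [sq]
  rw [hsq, hA.1.trace_eq_sum_eigenvalues, map_sum, map_sum]
  simp only [RCLike.ofReal_re]
  exact Finset.sum_sq_le_sq_sum_of_nonneg fun i _ => hA.eigenvalues_nonneg i

open scoped MatrixOrder in
theorem PosSemidef.trace_mul_nonneg {A B : Matrix n n 𝕜} (hA : A.PosSemidef)
    (hB : B.PosSemidef) : 0 ≤ (A * B).trace := by
  classical
  obtain ⟨X, rfl⟩ := CStarAlgebra.nonneg_iff_eq_star_mul_self.mp hB.nonneg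
  rw [star_eq_conjTranspose, ← Matrix.mul_assoc, trace_mul_cycle]
  exact (hA.mul_mul_conjTranspose_same X).trace_nonneg

theorem sum_trace_mul_measurement {ι : Type*} [Fintype ι] [DecidableEq n]
    (σ : ι → Matrix n n 𝕜) (hσtr : ∀ i, (σ i).trace = 1) (s : ι → Fin 2) (B : Matrix n n 𝕜) :
    ∑ i, (σ i * ((2 : 𝕜)⁻¹ • (1 + ((-1 : 𝕜) ^ (s i).val) • B))).trace
      = Fintype.card ι / 2 + 2⁻¹ * ((∑ i, (-1 : 𝕜) ^ (s i).val • σ i) * B).trace := by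
  simp only [Matrix.mul_smul, Matrix.mul_one, Matrix.trace_smul, Matrix.trace_add, hσtr,
    Finset.sum_mul, Matrix.smul_mul, Matrix.trace_sum, smul_eq_mul, mul_add,
    Finset.sum_add_distrib, Finset.mul_sum, Finset.sum_const, Finset.card_univ]
  ring

/-- `Matrix` carries no canonical norm, so this Hilbert–Schmidt structure is only installed as a
local instance. -/
abbrev hilbertSchmidtNormedAddCommGroup [DecidableEq n] : NormedAddCommGroup (Matrix n n 𝕜) :=
  toMatrixNormedAddCommGroup 1 PosDef.one

abbrev hilbertSchmidtInnerProductSpace [DecidableEq n] :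
    @InnerProductSpace 𝕜 (Matrix n n 𝕜) _
      hilbertSchmidtNormedAddCommGroup.toSeminormedAddCommGroup :=
  toMatrixInnerProductSpace 1 PosSemidef.one

end Matrix

theorem sum_fun_fin_three_fin_two {M : Type*} [AddCommMonoid M] (f : (Fin 3 → Fin 2) → M) :
    ∑ x, f x = f ![0, 0, 0] + f ![0, 0, 1] + f ![0, 1, 0] + f ![0, 1, 1]
      + f ![1, 0, 0] + f ![1, 0, 1] + f ![1, 1, 0] + f ![1, 1, 1] := by
  simp only [← (Fin.consEquiv fun _ => Fin 2).sum_comp, Fintype.sum_prod_type, Fin.sum_univ_two,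
    Fintype.sum_unique, add_assoc]
  rfl

theorem Nop_sub_Mop_eq_sum (σ : (Fin 3 → Fin 2) → Mat4) (y : Fin 3) :
    Nop σ y - Mop σ y = ∑ x, (-1 : ℂ) ^ (x y).val • σ x := by
  rw [sum_fun_fin_three_fin_two]
  fin_cases y <;> simp [Nop, Mop] <;> abel

theorem sum_sum_trace_mul_measurement_eq {σ : (Fin 3 → Fin 2) → Mat4}
    (hσtr : ∀ x, (σ x).trace = 1) (B : Fin 3 → Mat4) :
    ∑ y : Fin 3, ∑ x, (σ x * ((2 : ℂ)⁻¹ • (1 + ((-1 : ℂ) ^ (x y).val) • B y))).trace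
      = 12 + 2⁻¹ * ∑ y, ((Nop σ y - Mop σ y) * B y).trace := by
  simp only [Matrix.sum_trace_mul_measurement _ hσtr, ← Nop_sub_Mop_eq_sum,
    Finset.sum_add_distrib, ← Finset.mul_sum, Finset.sum_const, Finset.card_univ,
    Fintype.card_fun, Fintype.card_fin]
  norm_num

section HilbertSchmidt

attribute [local instance] Matrix.hilbertSchmidtNormedAddCommGroup
  Matrix.hilbertSchmidtInnerProductSpace

namespace Matrix

variable {n 𝕜 : Type*} [Fintype n] [DecidableEq n] [RCLike 𝕜]

theorem hilbertSchmidt_inner_def (A B : Matrix n n 𝕜) : ⟪A, B⟫_𝕜 = (B * Aᴴ).trace := by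
  simp [inner]

theorem hilbertSchmidt_norm_sq (A : Matrix n n 𝕜) : ‖A‖ ^ 2 = RCLike.re (A * Aᴴ).trace := by
  rw [← inner_self_eq_norm_sq (𝕜 := 𝕜), hilbertSchmidt_inner_def]

theorem IsHermitian.hilbertSchmidt_norm_sq_of_mul_self_eq_one {B : Matrix n n 𝕜}
    (hB : B.IsHermitian) (hB2 : B * B = 1) : ‖B‖ ^ 2 = Fintype.card n := by
  rw [hilbertSchmidt_norm_sq, hB.eq, hB2, trace_one, RCLike.natCast_re]

theorem PosSemidef.hilbertSchmidt_norm_sub_sq_le_two {ρ σ : Matrix n n 𝕜}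
    (hρ : ρ.PosSemidef) (hρtr : ρ.trace = 1) (hσ : σ.PosSemidef) (hσtr : σ.trace = 1) :
    ‖ρ - σ‖ ^ 2 ≤ 2 := by
  have hpurity : ∀ {τ : Matrix n n 𝕜}, τ.PosSemidef → τ.trace = 1 → ‖τ‖ ^ 2 ≤ 1 := by
    intro τ hτ hτtr
    simpa [hilbertSchmidt_norm_sq, hτ.1.eq, hτtr] using hτ.re_trace_mul_self_le_sq
  have hoverlap : 0 ≤ RCLike.re ⟪ρ, σ⟫_𝕜 := by
    rw [hilbertSchmidt_inner_def, hρ.1.eq]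
    exact (RCLike.nonneg_iff.mp (hσ.trace_mul_nonneg hρ)).1
  rw [@norm_sub_sq 𝕜]
  linarith [hpurity hρ hρtr, hpurity hσ hσtr]

end Matrix

theorem sum_norm_sq_Nop_sub_Mop_le {σ : (Fin 3 → Fin 2) → Mat4}
    (hσ : ∀ x, (σ x).PosSemidef) (hσtr : ∀ x, (σ x).trace = 1) :
    ∑ y, ‖Nop σ y - Mop σ y‖ ^ 2 ≤ 32 := by
  have hD : ∀ a b, ‖σ a - σ b‖ ^ 2 ≤ 2 := fun a b =>
    (hσ a).hilbertSchmidt_norm_sub_sq_le_two (hσtr a) (hσ b) (hσtr b)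
  set D₁ := σ ![0, 0, 0] - σ ![1, 1, 1]
  set D₂ := σ ![0, 0, 1] - σ ![1, 1, 0]
  set D₃ := σ ![0, 1, 0] - σ ![1, 0, 1]
  set D₄ := σ ![0, 1, 1] - σ ![1, 0, 0]
  have hC₀ : Nop σ 0 - Mop σ 0 = D₁ + D₂ + D₃ + D₄ := by simp [Nop, Mop, D₁, D₂, D₃, D₄]; abel
  have hC₁ : Nop σ 1 - Mop σ 1 = D₁ + D₂ - D₃ - D₄ := by simp [Nop, Mop, D₁, D₂, D₃, D₄]; abel
  have hC₂ : Nop σ 2 - Mop σ 2 = D₁ - D₂ + D₃ - D₄ := by simp [Nop, Mop, D₁, D₂, D₃, D₄]; abel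
  rw [Fin.sum_univ_three, hC₀, hC₁, hC₂]
  linarith [sum_norm_sq_hadamard ℂ D₁ D₂ D₃ D₄, sq_nonneg ‖D₁ - D₂ - D₃ + D₄‖,
    hD ![0, 0, 0] ![1, 1, 1], hD ![0, 0, 1] ![1, 1, 0], hD ![0, 1, 0] ![1, 0, 1],
    hD ![0, 1, 1] ![1, 0, 0]]

theorem eq_smul_Nop_sub_Mop_of_sum_trace_eq {σ : (Fin 3 → Fin 2) → Mat4}
    (hσ : ∀ x, (σ x).PosSemidef) (hσtr : ∀ x, (σ x).trace = 1) {B : Fin 3 → Mat4}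
    (hB : ∀ y, (B y).IsHermitian) (hB2 : ∀ y, B y * B y = 1)
    (hsum : ∑ y, ((Nop σ y - Mop σ y) * B y).trace = 8 * Real.sqrt 6) (y : Fin 3) :
    B y = ((Real.sqrt (3 / 8) : ℝ) : ℂ) • (Nop σ y - Mop σ y) := by
  have hnormB : ∑ y, ‖B y‖ ^ 2 = (2 * Real.sqrt 3) ^ 2 := by
    simp only [fun y => (hB y).hilbertSchmidt_norm_sq_of_mul_self_eq_one (hB2 y)]
    norm_num [mul_pow]
  have hnormC : ∑ y, ‖Nop σ y - Mop σ y‖ ^ 2 ≤ (4 * Real.sqrt 2) ^ 2 := by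
    rw [mul_pow, Real.sq_sqrt zero_le_two]
    linarith [sum_norm_sq_Nop_sub_Mop_le hσ hσtr]
  have hinner :
      ∑ y, RCLike.re ⟪B y, Nop σ y - Mop σ y⟫_ℂ = 2 * Real.sqrt 3 * (4 * Real.sqrt 2) := by
    simp only [Matrix.hilbertSchmidt_inner_def, fun y => (hB y).eq, RCLike.re_to_complex,
      ← Complex.re_sum, hsum]
    rw [show (6 : ℝ) = 3 * 2 by norm_num, Real.sqrt_mul zero_le_three]
    simp only [Complex.re_mul_ofReal, Complex.re_ofNat]
    ring
  have hratio : 2 * Real.sqrt 3 / (4 * Real.sqrt 2) = Real.sqrt (3 / 8) := by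
    rw [eq_comm, Real.sqrt_eq_iff_mul_self_eq_of_pos (by positivity)]
    field_simp
    rw [Real.sq_sqrt zero_le_three, Real.sq_sqrt zero_le_two]
    norm_num
  rw [← hratio]
  exact eq_smul_of_sum_re_inner_eq_mul B _ (by positivity) hnormB hnormC hinner y

end HilbertSchmidt

/-- Theorem 1(iii): if the average success probability of the variant of 3-bit
PMRAC attains the optimal value 1/2 + 1/√6, then Bob's observables are
uniquely determined: B_y = √(3/8)(N_y − M_y) for each y. -/
theorem optimal_determines_Bobs_observables
    (ρ : Mat4) (hρ : ρ.PosSemidef) (hρtr : ρ.trace = 1)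
    (U : (Fin 3 → Fin 2) → Mat2)
    (hU : ∀ x, U x ∈ Matrix.unitaryGroup (Fin 2) ℂ)
    (B : Fin 3 → Mat4)
    (hB : ∀ y, (B y).IsHermitian)
    (hB2 : ∀ y, B y * B y = 1)
    (hopt : ((24 : ℂ))⁻¹ * ∑ y : Fin 3, ∑ x : Fin 3 → Fin 2,
        ((ρst ρ U x) * ((2 : ℂ)⁻¹ • (1 + ((-1 : ℂ) ^ (x y).val) • B y))).trace
      = ((1 / 2 + 1 / Real.sqrt 6 : ℝ) : ℂ)) :
    ∀ y : Fin 3,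
      B y = ((Real.sqrt (3 / 8) : ℝ) : ℂ) • (Nop (ρst ρ U) y - Mop (ρst ρ U) y) := by
  have hstate : ∀ x, (ρst ρ U x).PosSemidef := fun x => hρ.mul_mul_conjTranspose_same _
  have hstate_tr : ∀ x, (ρst ρ U x).trace = 1 := fun x => by
    rw [ρst, trace_mul_cycle, ← star_eq_conjTranspose,
      Unitary.star_mul_self_of_mem (kronecker_mem_unitary (hU x) (one_mem _)), one_mul, hρtr]
  have hsum : ∑ y, ((Nop (ρst ρ U) y - Mop (ρst ρ U) y) * B y).trace = 8 * Real.sqrt 6 := by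
    rw [sum_sum_trace_mul_measurement_eq hstate_tr] at hopt
    set S := ∑ y, ((Nop (ρst ρ U) y - Mop (ρst ρ U) y) * B y).trace
    set s : ℂ := ((Real.sqrt 6 : ℝ) : ℂ)
    have hs : s ^ 2 = 6 := by
      rw [← Complex.ofReal_pow, Real.sq_sqrt (by norm_num)]
      norm_num
    have hs0 : s ≠ 0 := by positivity
    push_cast at hopt
    field_simp at hopt
    linear_combination (s / 6) * hopt - (S / 6) * hs
  exact eq_smul_Nop_sub_Mop_of_sum_trace_eq hstate hstate_tr hB hB2 hsum
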